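/- Endpoint-path equivalence: for every property graph G and pattern ψ, letting π_end((p, μ)) = (src(p), tgt(p), μ) be the projection sending a path-mapping pair to the triple of the path's source node, target node, and mapping, one has π_end(⟦ψ⟧^path_G) = ⟦ψ⟧_G; in particular, the path semantics and the endpoint semantics yield identical result relations when plugged into the relational algebra layer of core PGQ. -/

import Mathlib

namespace PGQ

/-! ### Values, identifiers, property graphs -/

abbrev Val := ℕ
/-- Identifiers are tuples of values (arity-`k` identifiers are lists of length `k`). -/
abbrev Ident := List Val
abbrev Var := ℕ
/-- Partial variable mappings from pattern variables to graph elements. -/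
abbrev Mapping := Var → Option Ident

/-- A property graph (data only): nodes, edges, endpoints, labels and properties. -/
structure PropertyGraph where
  N : Set Ident
  E : Set Ident
  src : Ident → Ident
  tgt : Ident → Ident
  lab : Ident → Val → Prop
  prop : Ident → Val → Option Val

/-- Conditions `θ` of patterns. -/
inductive Cond where
  | keyEq : Var → Val → Var → Val → Cond
  | hasLab : Val → Var → Cond
  | or : Cond → Cond → Cond
  | and : Cond → Cond → Cond
  | not : Cond → Cond

def Cond.sat (G : PropertyGraph) (μ : Mapping) : Cond → Prop
  | .keyEq x k y k' => ∃ a b v, μ x = some a ∧ μ y = some b ∧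
      G.prop a k = some v ∧ G.prop b k' = some v
  | .hasLab l x => ∃ a, μ x = some a ∧ G.lab a l
  | .or θ₁ θ₂ => θ₁.sat G μ ∨ θ₂.sat G μ
  | .and θ₁ θ₂ => θ₁.sat G μ ∧ θ₂.sat G μ
  | .not θ => ¬ θ.sat G μ

def Cond.vars : Cond → Set Var
  | .keyEq x _ y _ => {x, y}
  | .hasLab _ x => {x}
  | .or θ₁ θ₂ => θ₁.vars ∪ θ₂.vars
  | .and θ₁ θ₂ => θ₁.vars ∪ θ₂.vars
  | .not θ => θ.vars

/-- Patterns `ψ ::= (x) | →ˣ | ←ˣ | ψψ | ψ^{n..m} | ψ⟨θ⟩ | ψ+ψ`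
(the Kleene star `ψ*` is `rep ψ 0 ⊤`). -/
inductive Pattern where
  | node : Option Var → Pattern
  | fwd : Option Var → Pattern
  | bwd : Option Var → Pattern
  | concat : Pattern → Pattern → Pattern
  | rep : Pattern → ℕ → ℕ∞ → Pattern
  | filter : Pattern → Cond → Pattern
  | union : Pattern → Pattern → Pattern

def emptyMap : Mapping := fun _ => none

def single (x : Option Var) (a : Ident) : Mapping := fun y =>
  match x with
  | some x => if y = x then some a else none
  | none => none

/-- Two mappings are compatible if they agree on all common variables. -/
def Compatible (μ₁ μ₂ : Mapping) : Prop :=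
  ∀ x a b, μ₁ x = some a → μ₂ x = some b → a = b

def joinMap (μ₁ μ₂ : Mapping) : Mapping := fun x => (μ₁ x).orElse fun _ => μ₂ x

/-- `i`-fold chaining of endpoint triples (bindings are dropped). -/
def chain (G : PropertyGraph) (S : Set (Ident × Ident × Mapping)) : ℕ → Set (Ident × Ident)
  | 0 => {p | p.1 = p.2 ∧ p.1 ∈ G.N}
  | i + 1 => {p | ∃ u μ, (p.1, u, μ) ∈ S ∧ (u, p.2) ∈ chain G S i}

/-- Endpoint semantics `⟦ψ⟧_G`: triples (source, target, mapping). -/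
def Pattern.sem (G : PropertyGraph) : Pattern → Set (Ident × Ident × Mapping)
  | .node x => {t | ∃ n ∈ G.N, t = (n, n, single x n)}
  | .fwd x => {t | ∃ e ∈ G.E, t = (G.src e, G.tgt e, single x e)}
  | .bwd x => {t | ∃ e ∈ G.E, t = (G.tgt e, G.src e, single x e)}
  | .concat ψ₁ ψ₂ => {t | ∃ s m u μ₁ μ₂, (s, m, μ₁) ∈ ψ₁.sem G ∧ (m, u, μ₂) ∈ ψ₂.sem G ∧
      Compatible μ₁ μ₂ ∧ t = (s, u, joinMap μ₁ μ₂)}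
  | .rep ψ n m => {t | ∃ i : ℕ, n ≤ i ∧ (i : ℕ∞) ≤ m ∧ (t.1, t.2.1) ∈ chain G (ψ.sem G) i ∧
      t.2.2 = emptyMap}
  | .filter ψ θ => {t | t ∈ ψ.sem G ∧ θ.sat G t.2.2}
  | .union ψ₁ ψ₂ => ψ₁.sem G ∪ ψ₂.sem G

/-- Output list entries: a variable `x` or a property access `x.k`. -/
inductive OutItem where
  | var : Var → OutItem
  | key : Var → Val → OutItem

def OutItem.eval (G : PropertyGraph) (μ : Mapping) : OutItem → Option (List Val)
  | .var x => μ x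
  | .key x k => (μ x).bind fun a => (G.prop a k).map fun v => [v]

/-- Semantics of an output pattern `ψ_Ω` on `G`: the output relation. -/
def outSem (G : PropertyGraph) (ψ : Pattern) (Ω : List OutItem) : Set (List Val) :=
  {t | ∃ s u μ, (s, u, μ) ∈ ψ.sem G ∧ ∃ ls : List (List Val),
      List.Forall₂ (fun ω l => ω.eval G μ = some l) Ω ls ∧ t = ls.flatten}

/-! ### Property graph views -/

/-- `F` encodes a (total) function `Dom → Cod` (tuples are concatenations). -/
def EncFun (F Dom Cod : Set Ident) : Prop :=
  (∀ t ∈ F, ∃ e ∈ Dom, ∃ a ∈ Cod, t = e ++ a) ∧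
  (∀ e ∈ Dom, ∃! a, a ∈ Cod ∧ e ++ a ∈ F)

/-- The `k`-ary property graph view conditions on six relations. -/
structure IsPGView (k : ℕ) (R1 R2 R3 R4 R5 R6 : Set Ident) : Prop where
  ar1 : ∀ t ∈ R1, t.length = k
  ar2 : ∀ t ∈ R2, t.length = k
  disj : Disjoint R1 R2
  srcFun : EncFun R3 R2 R1
  tgtFun : EncFun R4 R2 R1
  labOk : ∀ t ∈ R5, ∃ x ∈ R1 ∪ R2, ∃ l : Val, t = x ++ [l]
  propOk : ∀ t ∈ R6, ∃ x ∈ R1 ∪ R2, ∃ ky v : Val, t = x ++ [ky, v]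
  propFun : ∀ x ∈ R1 ∪ R2, ∀ ky v v' : Val, x ++ [ky, v] ∈ R6 → x ++ [ky, v'] ∈ R6 → v = v'

open scoped Classical in
/-- `pgView` assembles a property graph from six relations. -/
noncomputable def pgView (R1 R2 R3 R4 R5 R6 : Set Ident) : PropertyGraph where
  N := R1
  E := R2
  src e := if h : ∃ a, a ∈ R1 ∧ e ++ a ∈ R3 then h.choose else []
  tgt e := if h : ∃ a, a ∈ R1 ∧ e ++ a ∈ R4 then h.choose else []
  lab x l := x ++ [l] ∈ R5
  prop x ky := if h : ∃ v, x ++ [ky, v] ∈ R6 then some h.choose else none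

/-! ### Relational databases -/

/-- A (finite) relational database over a schema: relation names `σ` with arities `ar`. -/
structure Database (σ : Type) (ar : σ → ℕ) where
  rel : σ → Set (List Val)
  wf : ∀ r, ∀ t ∈ rel r, t.length = ar r
  fin : ∀ r, (rel r).Finite

/-- Active domain of a database. -/
def Database.adom {σ : Type} {ar : σ → ℕ} (D : Database σ ar) : Set Val :=
  {v | ∃ r t, t ∈ D.rel r ∧ v ∈ t}

/-- Selection conditions of the relational algebra layer. -/
inductive SelCond where
  | eq : ℕ → ℕ → SelCond
  | or : SelCond → SelCond → SelCond
  | and : SelCond → SelCond → SelCond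
  | not : SelCond → SelCond

def SelCond.sat (t : List Val) : SelCond → Prop
  | .eq i j => ∃ v, t[i]? = some v ∧ t[j]? = some v
  | .or a b => a.sat t ∨ b.sat t
  | .and a b => a.sat t ∧ b.sat t
  | .not a => ¬ a.sat t

/-! ### PGQ queries

One syntax covers all fragments.  A pattern-matching node carries a tag `b : ℕ∞`
bounding the allowed arity of node/edge identifiers of the constructed graph view:
tag `1` corresponds to `pgView¹ = pgView` (the read-write fragment), tag `n` to
`pgViewⁿ`, and tag `⊤` to `pgView^ext`.  The read-only fragment additionally
requires all six view arguments to be stored relations and forbids constants. -/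

inductive Query (σ : Type) where
  | base : σ → Query σ
  | const : Val → Query σ
  | pm : ℕ∞ → Pattern → List OutItem →
      Query σ → Query σ → Query σ → Query σ → Query σ → Query σ → Query σ
  | proj : List ℕ → Query σ → Query σ
  | sel : SelCond → Query σ → Query σ
  | prod : Query σ → Query σ → Query σ
  | union : Query σ → Query σ → Query σ
  | diff : Query σ → Query σ → Query σ

/-- Semantics of pattern matching on a dynamically constructed graph view:
defined (nonempty) only if the six relations form a `k`-ary property graph view
for some `1 ≤ k` with `k ≤ b`. -/
noncomputable def pmSem (b : ℕ∞) (ψ : Pattern) (Ω : List OutItem)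
    (R1 R2 R3 R4 R5 R6 : Set Ident) : Set (List Val) :=
  {t | ∃ k : ℕ, 1 ≤ k ∧ (k : ℕ∞) ≤ b ∧ IsPGView k R1 R2 R3 R4 R5 R6 ∧
      t ∈ outSem (pgView R1 R2 R3 R4 R5 R6) ψ Ω}

noncomputable def Query.sem {σ : Type} {ar : σ → ℕ} (D : Database σ ar) :
    Query σ → Set (List Val)
  | .base r => D.rel r
  | .const c => {t | t = [c] ∧ c ∈ D.adom}
  | .pm b ψ Ω q1 q2 q3 q4 q5 q6 =>
      pmSem b ψ Ω (q1.sem D) (q2.sem D) (q3.sem D) (q4.sem D) (q5.sem D) (q6.sem D)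
  | .proj idx q => {t | ∃ u ∈ q.sem D, (∀ i ∈ idx, i < u.length) ∧ t = idx.map fun i => u.getD i 0}
  | .sel θ q => {t | t ∈ q.sem D ∧ θ.sat t}
  | .prod q₁ q₂ => {t | ∃ u ∈ q₁.sem D, ∃ v ∈ q₂.sem D, t = u ++ v}
  | .union q₁ q₂ => q₁.sem D ∪ q₂.sem D
  | .diff q₁ q₂ => q₁.sem D \ q₂.sem D

/-- All pattern-matching tags of the query are bounded by `b`. -/
def Query.tagsLE {σ : Type} (b : ℕ∞) : Query σ → Prop
  | .base _ => True
  | .const _ => True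
  | .pm a _ _ q1 q2 q3 q4 q5 q6 => a ≤ b ∧ q1.tagsLE b ∧ q2.tagsLE b ∧ q3.tagsLE b ∧
      q4.tagsLE b ∧ q5.tagsLE b ∧ q6.tagsLE b
  | .proj _ q => q.tagsLE b
  | .sel _ q => q.tagsLE b
  | .prod q₁ q₂ => q₁.tagsLE b ∧ q₂.tagsLE b
  | .union q₁ q₂ => q₁.tagsLE b ∧ q₂.tagsLE b
  | .diff q₁ q₂ => q₁.tagsLE b ∧ q₂.tagsLE b

/-- The read-write fragment `PGQ^rw`: unary identifiers only. -/
def Query.IsRW {σ : Type} (q : Query σ) : Prop := q.tagsLE 1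

/-- The extended fragment `PGQ^ext`: identifiers of arbitrary arity. -/
def Query.IsExt {σ : Type} (q : Query σ) : Prop := q.tagsLE ⊤

/-- The fragment `PGQⁿ`: identifiers of arity at most `n`. -/
def Query.IsLevel {σ : Type} (n : ℕ) (q : Query σ) : Prop := q.tagsLE (n : ℕ∞)

/-- The read-only fragment `PGQ^ro`: no constants, pattern matching only on
stored relations, unary identifiers. -/
def Query.IsRO {σ : Type} : Query σ → Prop
  | .base _ => True
  | .const _ => False
  | .pm a _ _ q1 q2 q3 q4 q5 q6 => a ≤ 1 ∧ (∃ r, q1 = .base r) ∧ (∃ r, q2 = .base r) ∧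
      (∃ r, q3 = .base r) ∧ (∃ r, q4 = .base r) ∧ (∃ r, q5 = .base r) ∧ (∃ r, q6 = .base r)
  | .proj _ q => q.IsRO
  | .sel _ q => q.IsRO
  | .prod q₁ q₂ => q₁.IsRO ∧ q₂.IsRO
  | .union q₁ q₂ => q₁.IsRO ∧ q₂.IsRO
  | .diff q₁ q₂ => q₁.IsRO ∧ q₂.IsRO

/-- Plain relational algebra: the fragment of `PGQ^ro` without pattern matching. -/
def Query.IsRA {σ : Type} : Query σ → Prop
  | .base _ => True
  | .const _ => False
  | .pm _ _ _ _ _ _ _ _ _ => False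
  | .proj _ q => q.IsRA
  | .sel _ q => q.IsRA
  | .prod q₁ q₂ => q₁.IsRA ∧ q₂.IsRA
  | .union q₁ q₂ => q₁.IsRA ∧ q₂.IsRA
  | .diff q₁ q₂ => q₁.IsRA ∧ q₂.IsRA

end PGQ

namespace PGQ

/-! ### Path semantics of patterns -/

/-- A path in a property graph: a head node followed by (edge, node) steps. -/
structure GPath where
  head : Ident
  steps : List (Ident × Ident)

def GPath.src (p : GPath) : Ident := p.head

def GPath.tgt (p : GPath) : Ident := (p.steps.map Prod.snd).getLastD p.head

/-- Concatenation of paths (meaningful when `p.tgt = q.head`). -/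
def GPath.comp (p q : GPath) : GPath := ⟨p.head, p.steps ++ q.steps⟩

/-- `i`-fold chaining of paths (bindings are dropped). -/
def pchain (G : PropertyGraph) (S : Set (GPath × Mapping)) : ℕ → Set GPath
  | 0 => {p | p.steps = [] ∧ p.head ∈ G.N}
  | i + 1 => {p | ∃ q r μ, (q, μ) ∈ S ∧ r ∈ pchain G S i ∧ q.tgt = r.head ∧ p = q.comp r}

/-- Path semantics `⟦ψ⟧^path_G`: pairs of a matched path and a variable mapping. -/
def Pattern.psem (G : PropertyGraph) : Pattern → Set (GPath × Mapping)
  | .node x => {t | ∃ n ∈ G.N, t = (⟨n, []⟩, single x n)}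
  | .fwd x => {t | ∃ e ∈ G.E, t = (⟨G.src e, [(e, G.tgt e)]⟩, single x e)}
  | .bwd x => {t | ∃ e ∈ G.E, t = (⟨G.tgt e, [(e, G.src e)]⟩, single x e)}
  | .concat ψ₁ ψ₂ => {t | ∃ p₁ p₂ μ₁ μ₂, (p₁, μ₁) ∈ ψ₁.psem G ∧ (p₂, μ₂) ∈ ψ₂.psem G ∧
      p₁.tgt = p₂.head ∧ Compatible μ₁ μ₂ ∧ t = (p₁.comp p₂, joinMap μ₁ μ₂)}
  | .rep ψ n m => {t | ∃ i : ℕ, n ≤ i ∧ (i : ℕ∞) ≤ m ∧ t.1 ∈ pchain G (ψ.psem G) i ∧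
      t.2 = emptyMap}
  | .filter ψ θ => {t | t ∈ ψ.psem G ∧ θ.sat G t.2}
  | .union ψ₁ ψ₂ => ψ₁.psem G ∪ ψ₂.psem G

end PGQ

namespace PGQ

lemma GPath.comp_src (p q : GPath) : (p.comp q).src = p.src := rfl

lemma GPath.tgt_nil (h : ∀ x ∈ GPath.steps p, False) : GPath.tgt p = p.head := by
  cases p with
  | mk hd st =>
    cases st with
    | nil => rfl
    | cons a l => exact absurd (List.mem_cons_self (a := a) (l := l)) (h a)

lemma GPath.comp_tgt (p q : GPath) (h : p.tgt = q.head) : (p.comp q).tgt = q.tgt := by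
  unfold GPath.comp GPath.tgt
  rcases p with ⟨ph, ps⟩
  rcases q with ⟨qh, qs⟩
  simp only at *
  cases qs with
  | nil => simpa [GPath.tgt] using h
  | cons a l =>
    simp only [List.map_append, List.map_cons]
    rw [List.getLastD_eq_getLast?, List.getLastD_eq_getLast?,
      List.getLast?_append_cons]
    rcases e : (a.2 :: List.map Prod.snd l).getLast? with _ | x
    · simp at e
    · simp [e]

lemma chain_iff (G : PropertyGraph) (S : Set (GPath × Mapping)) (i : ℕ) (s t : Ident) :
    (s, t) ∈ chain G ((fun t : GPath × Mapping => (t.1.src, t.1.tgt, t.2)) '' S) i ↔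
      ∃ p ∈ pchain G S i, p.src = s ∧ p.tgt = t := by
  induction i generalizing s t with
  | zero =>
    constructor
    · rintro ⟨h1, h2⟩
      exact ⟨⟨s, []⟩, ⟨rfl, h2⟩, rfl, h1⟩
    · rintro ⟨p, ⟨hnil, hN⟩, rfl, rfl⟩
      have : p.tgt = p.head := by
        apply GPath.tgt_nil; intro x hx; rw [hnil] at hx; simp at hx
      exact ⟨this.symm, hN⟩
  | succ i ih =>
    constructor
    · rintro ⟨u, μ, ⟨⟨q, μ'⟩, hq, heq⟩, hrest⟩
      obtain ⟨r, hr, hrs, hrt⟩ := (ih u t).mp hrest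
      simp only [Prod.mk.injEq] at heq
      obtain ⟨h1, h2, h3⟩ := heq
      have hqr : q.tgt = r.head := h2.trans hrs.symm
      refine ⟨q.comp r, ⟨q, r, μ', hq, hr, hqr, rfl⟩, ?_, ?_⟩
      · rw [GPath.comp_src, h1]
      · rw [GPath.comp_tgt q r hqr, hrt]
    · rintro ⟨p, ⟨q, r, μ, hq, hr, hqr, rfl⟩, rfl, rfl⟩
      refine ⟨r.src, μ, ⟨(q, μ), hq, ?_⟩, (ih r.src (q.comp r).tgt).mpr
        ⟨r, hr, rfl, (GPath.comp_tgt q r hqr).symm⟩⟩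
      exact congrArg (fun z => (q.src, z, μ)) hqr

/-- Endpoint-path equivalence: for every property graph `G`
and pattern `ψ`, projecting each path-mapping pair of the path semantics to
(source, target, mapping) yields exactly the endpoint semantics,
`π_end(⟦ψ⟧^path_G) = ⟦ψ⟧_G`. -/
theorem endpoint_path_equivalence (G : PropertyGraph) (ψ : Pattern) :
    (fun t : GPath × Mapping => (t.1.src, t.1.tgt, t.2)) '' ψ.psem G = ψ.sem G := by
  induction ψ with
  | node x =>
    ext ⟨s, t, μ⟩
    constructor
    · rintro ⟨⟨p, ν⟩, ⟨n, hn, heq⟩, hproj⟩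
      simp only [Prod.mk.injEq] at heq
      obtain ⟨h1, h2⟩ := heq
      subst h1 h2
      simp only [Prod.mk.injEq] at hproj
      obtain ⟨h1, h2, h3⟩ := hproj
      exact ⟨n, hn, by simp [← h1, ← h2, ← h3, GPath.src, GPath.tgt]⟩
    · rintro ⟨n, hn, heq⟩
      simp only [Prod.mk.injEq] at heq
      obtain ⟨h1, h2, h3⟩ := heq
      exact ⟨(⟨n, []⟩, single x n), ⟨n, hn, rfl⟩,
        by simp [GPath.src, GPath.tgt, h1, h2, h3]⟩
  | fwd x =>
    ext ⟨s, t, μ⟩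
    constructor
    · rintro ⟨⟨p, ν⟩, ⟨e, he, heq⟩, hproj⟩
      simp only [Prod.mk.injEq] at heq
      obtain ⟨h1, h2⟩ := heq
      subst h1 h2
      simp only [Prod.mk.injEq] at hproj
      obtain ⟨h1, h2, h3⟩ := hproj
      exact ⟨e, he, by simp [← h1, ← h2, ← h3, GPath.src, GPath.tgt]⟩
    · rintro ⟨e, he, heq⟩
      simp only [Prod.mk.injEq] at heq
      obtain ⟨h1, h2, h3⟩ := heq
      exact ⟨(⟨G.src e, [(e, G.tgt e)]⟩, single x e), ⟨e, he, rfl⟩,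
        by simp [GPath.src, GPath.tgt, h1, h2, h3]⟩
  | bwd x =>
    ext ⟨s, t, μ⟩
    constructor
    · rintro ⟨⟨p, ν⟩, ⟨e, he, heq⟩, hproj⟩
      simp only [Prod.mk.injEq] at heq
      obtain ⟨h1, h2⟩ := heq
      subst h1 h2
      simp only [Prod.mk.injEq] at hproj
      obtain ⟨h1, h2, h3⟩ := hproj
      exact ⟨e, he, by simp [← h1, ← h2, ← h3, GPath.src, GPath.tgt]⟩
    · rintro ⟨e, he, heq⟩
      simp only [Prod.mk.injEq] at heq
      obtain ⟨h1, h2, h3⟩ := heq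
      exact ⟨(⟨G.tgt e, [(e, G.src e)]⟩, single x e), ⟨e, he, rfl⟩,
        by simp [GPath.src, GPath.tgt, h1, h2, h3]⟩
  | concat ψ₁ ψ₂ ih₁ ih₂ =>
    ext ⟨s, t, μ⟩
    constructor
    · rintro ⟨⟨p, ν⟩, ⟨p₁, p₂, μ₁, μ₂, h1, h2, htgt, hcomp, heq⟩, hproj⟩
      simp only [Prod.mk.injEq] at heq
      obtain ⟨he1, he2⟩ := heq
      subst he1 he2
      simp only [Prod.mk.injEq] at hproj
      obtain ⟨hs, ht, hm⟩ := hproj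
      refine ⟨p₁.src, p₁.tgt, p₂.tgt, μ₁, μ₂, ?_, ?_, hcomp, ?_⟩
      · rw [← ih₁]; exact ⟨(p₁, μ₁), h1, rfl⟩
      · rw [← ih₂]; exact ⟨(p₂, μ₂), h2, by simp [GPath.src, htgt]⟩
      · rw [← hs, ← ht, ← hm, GPath.comp_src, GPath.comp_tgt p₁ p₂ htgt]
    · rintro ⟨s', m, u, μ₁, μ₂, h1, h2, hcomp, heq⟩
      rw [← ih₁] at h1; rw [← ih₂] at h2
      obtain ⟨⟨p₁, ν₁⟩, hp1, he1⟩ := h1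
      obtain ⟨⟨p₂, ν₂⟩, hp2, he2⟩ := h2
      simp only [Prod.mk.injEq] at he1 he2 heq
      obtain ⟨e1, e2, e3⟩ := he1
      obtain ⟨f1, f2, f3⟩ := he2
      obtain ⟨g1, g2, g3⟩ := heq
      subst e3 f3
      have htgt : p₁.tgt = p₂.head := by rw [e2, ← f1]; rfl
      refine ⟨(p₁.comp p₂, joinMap ν₁ ν₂),
        ⟨p₁, p₂, ν₁, ν₂, hp1, hp2, htgt, hcomp, rfl⟩, ?_⟩
      simp only [Prod.mk.injEq]
      exact ⟨by rw [GPath.comp_src, e1, g1],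
        by rw [GPath.comp_tgt p₁ p₂ htgt, f2, g2], g3.symm⟩
  | rep ψ n m ih =>
    ext ⟨s, t, μ⟩
    constructor
    · rintro ⟨⟨p, ν⟩, ⟨i, hni, him, hpc, hemp⟩, hproj⟩
      simp only [Prod.mk.injEq] at hproj
      obtain ⟨hs, ht, hm⟩ := hproj
      refine ⟨i, hni, him, ?_, hm ▸ hemp⟩
      rw [← ih]
      exact (chain_iff G (ψ.psem G) i s t).mpr ⟨p, hpc, hs, ht⟩
    · rintro ⟨i, hni, him, hch, hemp⟩
      rw [← ih] at hch
      obtain ⟨p, hp, hs, ht⟩ := (chain_iff G (ψ.psem G) i s t).mp hch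
      exact ⟨(p, emptyMap), ⟨i, hni, him, hp, rfl⟩, by simp [hs, ht, hemp.symm]⟩
  | filter ψ θ ih =>
    ext ⟨s, t, μ⟩
    constructor
    · rintro ⟨⟨p, ν⟩, ⟨hmem, hsat⟩, hproj⟩
      simp only [Prod.mk.injEq] at hproj
      obtain ⟨hs, ht, hm⟩ := hproj
      subst hm
      exact ⟨by rw [← ih]; exact ⟨(p, ν), hmem, by simp [hs, ht]⟩, hsat⟩
    · rintro ⟨hmem, hsat⟩
      rw [← ih] at hmem
      obtain ⟨⟨p, ν⟩, hp, heq⟩ := hmem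
      simp only [Prod.mk.injEq] at heq
      obtain ⟨h1, h2, h3⟩ := heq
      subst h3
      exact ⟨(p, ν), ⟨hp, hsat⟩, by simp [h1, h2]⟩
  | union ψ₁ ψ₂ ih₁ ih₂ =>
    show _ '' (ψ₁.psem G ∪ ψ₂.psem G) = ψ₁.sem G ∪ ψ₂.sem G
    rw [Set.image_union, ih₁, ih₂]

end PGQ
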